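/- arXiv:2307.03785 — 5 statements merged into one kernel-verified Lean document; each statement's English description precedes it below -/
import Mathlib

section
/- Let p be a prime, K = 𝔽_p(t_1,...,t_p), and S = K[x_0,...,x_p]/(x_0^p − t_1 x_1^p − ··· − t_p x_p^p). Then the element (x_0 − t_1^{1/p} x_1 − ··· − t_p^{1/p} x_p) · x_1 ··· x_{p−1} of S ⊗_K K^{1/p} is a nonzero nilpotent element; in particular S ⊗_K K^{1/p} is not reduced. -/
open MvPolynomial

set_option maxHeartbeats 1000000
set_option synthInstance.maxHeartbeats 400000

/-- `K = 𝔽_p(t₁,...,t_p)`. -/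
abbrev K₃ (p : ℕ) [Fact p.Prime] : Type := FractionRing (MvPolynomial (Fin p) (ZMod p))

/-- The elements `t₁, ..., t_p` of `K`. -/
noncomputable abbrev t₃ (p : ℕ) [Fact p.Prime] (i : Fin p) : K₃ p :=
  algebraMap (MvPolynomial (Fin p) (ZMod p)) (K₃ p) (X i)

/-- The hypersurface `S = K[x₀,...,x_p]/(x₀ᵖ - t₁x₁ᵖ - ⋯ - t_p x_pᵖ)`. -/
abbrev S₃ (p : ℕ) [Fact p.Prime] : Type :=
  MvPolynomial (Fin (p + 1)) (K₃ p) ⧸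
    Ideal.span {(X 0 : MvPolynomial (Fin (p + 1)) (K₃ p)) ^ p -
      ∑ i : Fin p, C (t₃ p i) * X i.succ ^ p}

/-- The images `x₀, ..., x_p` of the variables in `S`. -/
noncomputable abbrev x₃ (p : ℕ) [Fact p.Prime] (j : Fin (p + 1)) : S₃ p :=
  Ideal.Quotient.mk _ (X j)

/-- Let `K = 𝔽_p(t₁,...,t_p)` and `S = K[x₀,...,x_p]/(x₀ᵖ - t₁x₁ᵖ - ⋯ - t_p x_pᵖ)`.
Let `L = K^{1/p}`, i.e. a field extension of `K` generated by elements `s i` with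
`(s i)ᵖ = tᵢ` (every element of `K^{1/p}` arises this way since `𝔽_p` is perfect), and
let `T = S ⊗_K L` (expressed as a pushout of `S` and `L` over `K`).  Then
`(x₀ - t₁^{1/p}x₁ - ⋯ - t_p^{1/p}x_p) ⬝ x₁⋯x_{p-1}` is a nonzero nilpotent element of
`T = S ⊗_K K^{1/p}`; in particular `S ⊗_K K^{1/p}` is not reduced. -/
theorem stmt_3 (p : ℕ) (hp : p.Prime) :
    letI : Fact p.Prime := ⟨hp⟩
    ∀ (L : Type) [Field L] [Algebra (K₃ p) L] (s : Fin p → L),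
      (∀ i, s i ^ p = algebraMap (K₃ p) L (t₃ p i)) →
      Algebra.adjoin (K₃ p) (Set.range s) = ⊤ →
      ∀ (T : Type) [CommRing T] [Algebra (K₃ p) T] [Algebra (S₃ p) T] [Algebra L T]
        [IsScalarTower (K₃ p) (S₃ p) T] [IsScalarTower (K₃ p) L T]
        [Algebra.IsPushout (K₃ p) (S₃ p) L T],
        ∀ u : T,
          u = (@algebraMap (S₃ p) T inferInstance _ _ (x₃ p 0) -
                ∑ i : Fin p, algebraMap L T (s i) * @algebraMap (S₃ p) T inferInstance _ _ (x₃ p i.succ)) *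
              @algebraMap (S₃ p) T inferInstance _ _ (∏ i : Fin (p - 1), x₃ p ⟨i.1 + 1, by omega⟩) →
          u ≠ 0 ∧ u ^ p = 0 ∧ ¬ IsReduced T := by
  intro L _ _ s hs hadj T _ _ _ _ _ _ _ u hu
  haveI : Fact p.Prime := ⟨hp⟩
  haveI hK : CharP (K₃ p) p :=
    charP_of_injective_algebraMap
      (IsFractionRing.injective (MvPolynomial (Fin p) (ZMod p)) (K₃ p)) p
  haveI hL : CharP L p := charP_of_injective_algebraMap (algebraMap (K₃ p) L).injective p
  set R := MvPolynomial (Fin (p + 1)) L with hR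
  set w : R := ∑ i : Fin p, C (s i) * X i.succ with hw
  set g : R := X 0 - w with hg
  set m : R := ∏ i : Fin (p - 1), X (⟨i.1 + 1, by omega⟩ : Fin (p + 1)) with hm
  set I : Ideal R := Ideal.span {g ^ p} with hI
  -- the Frobenius identity
  have key : g ^ p = X 0 ^ p - ∑ i : Fin p, C (algebraMap (K₃ p) L (t₃ p i)) * X i.succ ^ p := by
    rw [hg, sub_pow_char, hw, sum_pow_char]
    congr 1
    refine Finset.sum_congr rfl fun i _ => ?_
    rw [mul_pow, ← C_pow, hs]
  -- the map `S → R ⧸ I`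
  set ψ₀ : MvPolynomial (Fin (p + 1)) (K₃ p) →ₐ[K₃ p] R ⧸ I :=
    aeval (fun j => Ideal.Quotient.mk I (X j)) with hψ₀
  have halg : ∀ a : K₃ p,
      algebraMap (K₃ p) (R ⧸ I) a = Ideal.Quotient.mk I (C (algebraMap (K₃ p) L a)) := by
    intro a
    rw [IsScalarTower.algebraMap_apply (K₃ p) R (R ⧸ I),
      IsScalarTower.algebraMap_apply (K₃ p) L R, MvPolynomial.algebraMap_eq,
      Ideal.Quotient.algebraMap_eq]
  have hker0 : ψ₀ ((X 0 : MvPolynomial (Fin (p + 1)) (K₃ p)) ^ p -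
      ∑ i : Fin p, C (t₃ p i) * X i.succ ^ p) = 0 := by
    have : ψ₀ ((X 0 : MvPolynomial (Fin (p + 1)) (K₃ p)) ^ p -
        ∑ i : Fin p, C (t₃ p i) * X i.succ ^ p) = Ideal.Quotient.mk I (g ^ p) := by
      rw [key]
      simp only [map_sub, map_pow, map_sum, map_mul, aeval_X, aeval_C, halg, hψ₀]
    rw [this, Ideal.Quotient.eq_zero_iff_mem]
    exact Ideal.subset_span rfl
  set ψ : S₃ p →ₐ[K₃ p] R ⧸ I := Ideal.Quotient.liftₐ _ ψ₀ (by
    intro a ha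
    rw [Ideal.mem_span_singleton] at ha
    obtain ⟨c, rfl⟩ := ha
    rw [map_mul, hker0, zero_mul]) with hψ
  have hψmk : ∀ q, ψ (Ideal.Quotient.mk _ q) = ψ₀ q := fun q => by
    rw [hψ, Ideal.Quotient.liftₐ_apply]
    rfl
  set χ : L →ₐ[K₃ p] R ⧸ I := IsScalarTower.toAlgHom (K₃ p) L (R ⧸ I) with hχ
  set Φ : T →ₐ[K₃ p] R ⧸ I :=
    Algebra.pushoutDesc (S := S₃ p) T ψ χ (fun x y => mul_comm _ _) with hΦ
  -- compute Φ u
  have hχs : ∀ i, χ (s i) = Ideal.Quotient.mk I (C (s i)) := by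
    intro i
    show algebraMap L (R ⧸ I) (s i) = _
    rw [IsScalarTower.algebraMap_apply L R (R ⧸ I), MvPolynomial.algebraMap_eq,
      Ideal.Quotient.algebraMap_eq]
  have hΦu : Φ u = Ideal.Quotient.mk I (g * m) := by
    rw [hu, map_mul, map_sub, map_sum]
    rw [Algebra.pushoutDesc_left (S' := T)]
    have h2 : ∀ i : Fin p, Φ (algebraMap L T (s i) * @algebraMap (S₃ p) T inferInstance _ _ (x₃ p i.succ))
        = Ideal.Quotient.mk I (C (s i) * X i.succ) := by
      intro i
      rw [map_mul, Algebra.pushoutDesc_left (S' := T), Algebra.pushoutDesc_right (S' := T),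
        hχs, hψmk, hψ₀, aeval_X, ← map_mul]
    rw [Finset.sum_congr rfl fun i _ => h2 i]
    rw [Algebra.pushoutDesc_left (S' := T)]
    have h3 : (∏ i : Fin (p - 1), x₃ p ⟨i.1 + 1, by omega⟩) =
        Ideal.Quotient.mk _ (∏ i : Fin (p - 1),
          (X (⟨i.1 + 1, by omega⟩ : Fin (p + 1)) : MvPolynomial (Fin (p + 1)) (K₃ p))) := by
      rw [map_prod]
    rw [h3, hψmk, hψmk, hψ₀, map_prod]
    simp only [aeval_X]
    rw [← map_sum, ← map_sub, ← map_prod, ← map_mul, hg, hw, hm]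
  -- `g * m ∉ I`
  have hne : Ideal.Quotient.mk I (g * m) ≠ 0 := by
    rw [Ne, Ideal.Quotient.eq_zero_iff_mem, hI, Ideal.mem_span_singleton]
    rintro ⟨c, hc⟩
    -- apply the automorphism sending X 0 to X 0 + w
    set σ : R →ₐ[L] R := aeval (fun j => if j = 0 then X 0 + w else X j) with hσ
    have hσw : σ w = w := by
      rw [hw, map_sum]
      refine Finset.sum_congr rfl fun i _ => ?_
      rw [map_mul, hσ, aeval_C, aeval_X, if_neg (Fin.succ_ne_zero i), MvPolynomial.algebraMap_eq]
    have hσg : σ g = X 0 := by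
      rw [hg, map_sub, hσw, hσ, aeval_X, if_pos rfl, add_sub_cancel_right]
    have hσm : σ m = m := by
      rw [hm, map_prod]
      refine Finset.prod_congr rfl fun i _ => ?_
      rw [hσ, aeval_X, if_neg]
      intro h
      have := congrArg Fin.val h
      simp at this
    have hc' : (X 0 : R) * m = X 0 ^ p * σ c := by
      have := congrArg σ hc
      rwa [map_mul, map_mul, map_pow, hσg, hσm] at this
    -- coefficient contradiction
    set d : Fin (p + 1) →₀ ℕ := Finsupp.single 0 1 +
      ∑ i : Fin (p - 1), Finsupp.single (⟨i.1 + 1, by omega⟩ : Fin (p + 1)) 1 with hd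
    have hmm : m = monomial (∑ i : Fin (p - 1),
        Finsupp.single (⟨i.1 + 1, by omega⟩ : Fin (p + 1)) 1) 1 := by
      rw [hm]
      induction (Finset.univ : Finset (Fin (p - 1))) using Finset.induction with
      | empty => simp
      | insert _ _ h ih =>
          rw [Finset.prod_insert h, Finset.sum_insert h, ih, X, monomial_mul, one_mul]
    have hXm : (X 0 : R) * m = monomial d 1 := by
      rw [hmm, X, monomial_mul, one_mul, hd]
    have hd0 : d 0 = 1 := by
      rw [hd, Finsupp.add_apply, Finsupp.single_eq_same, Finsupp.finset_sum_apply]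
      have h9 : ∀ i : Fin (p - 1),
          (Finsupp.single (⟨i.1 + 1, by omega⟩ : Fin (p + 1)) (1 : ℕ)) 0 = 0 := by
        intro i
        rw [Finsupp.single_apply, if_neg]
        intro h
        have := congrArg Fin.val h
        simp at this
      rw [Finset.sum_congr rfl fun i _ => h9 i, Finset.sum_const_zero]
      rfl
    have h1 : coeff d ((X 0 : R) * m) = 1 := by
      rw [hXm, coeff_monomial, if_pos rfl]
    have h2 : coeff d ((X 0 : R) ^ p * σ c) = 0 := by
      rw [X_pow_eq_monomial, coeff_monomial_mul', if_neg]
      intro hle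
      have := hle 0
      rw [Finsupp.single_eq_same, hd0] at this
      have hp2 := hp.two_le
      omega
    rw [hc', h2] at h1
    exact one_ne_zero h1.symm
  have hune : u ≠ 0 := by
    intro h
    rw [h, map_zero] at hΦu
    exact hne hΦu.symm
  -- nilpotency
  haveI : Nontrivial T := nontrivial_of_ne u 0 hune
  haveI : CharP T p := by
    have hpT : (p : T) = 0 := by
      calc (p : T) = algebraMap (K₃ p) T (p : K₃ p) :=
            (map_natCast (algebraMap (K₃ p) T) p).symm
        _ = 0 := by rw [CharP.cast_eq_zero (K₃ p) p, map_zero]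
    have hdvd : ringChar T ∣ p := ringChar.dvd hpT
    have heq : ringChar T = p :=
      (hp.eq_one_or_self_of_dvd _ hdvd).resolve_left (CharP.ringChar_ne_one)
    exact ringChar.of_eq heq
  have halgS : ∀ a : K₃ p, algebraMap (K₃ p) (S₃ p) a =
      Ideal.Quotient.mk _ (C a : MvPolynomial (Fin (p + 1)) (K₃ p)) := by
    intro a
    rw [IsScalarTower.algebraMap_apply (K₃ p) (MvPolynomial (Fin (p + 1)) (K₃ p)) (S₃ p),
      MvPolynomial.algebraMap_eq, Ideal.Quotient.algebraMap_eq]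
  have hA : (@algebraMap (S₃ p) T inferInstance _ _ (x₃ p 0) -
      ∑ i : Fin p, algebraMap L T (s i) * @algebraMap (S₃ p) T inferInstance _ _ (x₃ p i.succ)) ^ p = 0 := by
    rw [sub_pow_char, sum_pow_char]
    have h5 : ∀ i : Fin p, (algebraMap L T (s i) * @algebraMap (S₃ p) T inferInstance _ _ (x₃ p i.succ)) ^ p
        = @algebraMap (S₃ p) T inferInstance _ _ (algebraMap (K₃ p) (S₃ p) (t₃ p i) * (x₃ p i.succ) ^ p) := by
      intro i
      rw [mul_pow, ← map_pow, ← map_pow, hs, ← IsScalarTower.algebraMap_apply,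
        IsScalarTower.algebraMap_apply (K₃ p) (S₃ p) T, ← map_mul]
    rw [Finset.sum_congr rfl fun i _ => h5 i, ← map_pow, ← map_sum, ← map_sub]
    have h6 : (x₃ p 0) ^ p - ∑ i : Fin p, algebraMap (K₃ p) (S₃ p) (t₃ p i) * (x₃ p i.succ) ^ p
        = Ideal.Quotient.mk _ ((X 0 : MvPolynomial (Fin (p + 1)) (K₃ p)) ^ p -
            ∑ i : Fin p, C (t₃ p i) * X i.succ ^ p) := by
      simp only [map_sub, map_pow, map_sum, map_mul, halgS]
    have h7 : Ideal.Quotient.mk (Ideal.span {(X 0 : MvPolynomial (Fin (p + 1)) (K₃ p)) ^ p -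
          ∑ i : Fin p, C (t₃ p i) * X i.succ ^ p})
        ((X 0 : MvPolynomial (Fin (p + 1)) (K₃ p)) ^ p -
          ∑ i : Fin p, C (t₃ p i) * X i.succ ^ p) = 0 :=
      Ideal.Quotient.eq_zero_iff_mem.mpr (Ideal.subset_span rfl)
    rw [h6, h7, map_zero]
  have hup : u ^ p = 0 := by
    rw [hu, mul_pow, hA, zero_mul]
  exact ⟨hune, hup, fun hred => hune (hred.eq_zero u ⟨p, hup⟩)⟩
end

section
/- Let p be a prime and K = 𝔽_p(t). In the polynomial ring K[x,y], suppose c_0,...,c_k ∈ K with k ≤ p−1 satisfy (Σ_{α+β=k} c_α^p x^{βp} y^{αp}) (t x^{p+1} + x y^p)^k ∈ (x^{(k+1)p}, y^{(k+1)p}). Then the coefficient of x^{kp+k} y^{kp} vanishes, i.e., Σ_{α=0}^{k} binom(k,α) c_α^p t^α = 0. -/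
open MvPolynomial Finset

lemma fin2_eq' {m n : ℕ} (e : Fin 2 →₀ ℕ) :
    (Finsupp.single (0 : Fin 2) m + Finsupp.single 1 n = e) ↔ (e 0 = m ∧ e 1 = n) := by
  constructor
  · rintro rfl; simp [Finsupp.single_apply]
  · rintro ⟨h0, h1⟩
    ext j
    fin_cases j <;> simp [Finsupp.single_apply] <;> omega

lemma coeff_CXY' {K : Type*} [CommSemiring K] (r : K) (m n : ℕ) (e : Fin 2 →₀ ℕ) :
    coeff e (C r * X 0 ^ m * X 1 ^ n : MvPolynomial (Fin 2) K)
      = if e 0 = m ∧ e 1 = n then r else 0 := by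
  rw [show (C r * X 0 ^ m * X 1 ^ n : MvPolynomial (Fin 2) K)
      = monomial (Finsupp.single 0 m + Finsupp.single 1 n) r by
    rw [X_pow_eq_monomial, X_pow_eq_monomial, C_apply, monomial_mul, monomial_mul,
      mul_one, mul_one, zero_add]]
  simp [coeff_monomial, fin2_eq']

lemma arith_iff (p k α i : ℕ) (hα : α ≤ k) (hi : i ≤ k) (hp : 0 < p) :
    (k*p+k = (k-α)*p + (p+1)*i + (k-i) ∧ k*p = α*p + p*(k-i)) ↔ i = α := by
  have e1 : (k-α)*p = k*p - α*p := Nat.sub_mul _ _ _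
  have e2 : p*(k-i) = k*p - i*p := by rw [mul_comm, Nat.sub_mul]
  have e3 : (p+1)*i = i*p + i := by ring
  have hαp : α*p ≤ k*p := Nat.mul_le_mul_right _ hα
  have hip : i*p ≤ k*p := Nat.mul_le_mul_right _ hi
  constructor
  · rintro ⟨h1, h2⟩
    have : i*p = α*p := by omega
    exact Nat.eq_of_mul_eq_mul_right hp this
  · rintro rfl
    omega

/-- Let `p` be prime and `K = 𝔽_p(t)`.  In `K[x,y]`, suppose `c₀, ..., c_k ∈ K` with
`k ≤ p - 1` satisfy
`(∑_{α+β=k} c_α^p x^{βp} y^{αp}) (t x^{p+1} + x yᵖ)^k ∈ (x^{(k+1)p}, y^{(k+1)p})`.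
Then the coefficient of `x^{kp+k} y^{kp}` vanishes, i.e.
`∑_{α=0}^{k} (k choose α) c_α^p t^α = 0`. -/
theorem stmt_7 (p : ℕ) (hp : p.Prime) :
    letI : Fact p.Prime := ⟨hp⟩
    let K := RatFunc (ZMod p)
    let t : K := RatFunc.X
    let x : MvPolynomial (Fin 2) K := X 0
    let y : MvPolynomial (Fin 2) K := X 1
    ∀ (k : ℕ), k ≤ p - 1 → ∀ c : Fin (k + 1) → K,
      (∑ α : Fin (k + 1), C (c α ^ p) * x ^ ((k - (α : ℕ)) * p) * y ^ ((α : ℕ) * p)) *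
          (C t * x ^ (p + 1) + x * y ^ p) ^ k ∈
        Ideal.span {x ^ ((k + 1) * p), y ^ ((k + 1) * p)} →
      (∑ α : Fin (k + 1), (k.choose α : K) * c α ^ p * t ^ (α : ℕ)) = 0 := by
  intro K t x y k hk c hmem
  have hx : x = X 0 := rfl
  have hy : y = X 1 := rfl
  have hkp : k < p := by have := hp.two_le; omega
  set e : Fin 2 →₀ ℕ := Finsupp.single (0 : Fin 2) (k*p+k) + Finsupp.single 1 (k*p) with he
  have he0 : e 0 = k*p+k := by simp [he, Finsupp.single_apply]
  have he1 : e 1 = k*p := by simp [he, Finsupp.single_apply]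
  rw [Ideal.mem_span_pair] at hmem
  obtain ⟨a, b, hab⟩ := hmem
  have h0 : coeff e ((∑ α : Fin (k+1), C (c α ^ p) * x ^ ((k - (α:ℕ))*p) * y ^ ((α:ℕ)*p)) *
      (C t * x ^ (p+1) + x * y ^ p) ^ k) = 0 := by
    rw [← hab, coeff_add, hx, hy]
    have hX : ∀ (f : MvPolynomial (Fin 2) K) (j : Fin 2), e j < (k+1)*p →
        coeff e (f * X j ^ ((k+1)*p)) = 0 := by
      intro f j hj
      rw [X_pow_eq_monomial, coeff_mul_monomial', if_neg]
      rw [Finsupp.single_le_iff]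
      omega
    have h1 : (k+1)*p = k*p + p := by ring
    rw [hX a 0 (by rw [he0, h1]; omega), hX b 1 (by rw [he1, h1]; omega), add_zero]
  rw [← h0, hx, hy, add_pow, Finset.sum_mul_sum]
  simp only [coeff_sum]
  have hterm : ∀ (α : Fin (k+1)) (i : ℕ),
      C (c α ^ p) * X 0 ^ ((k - (α:ℕ))*p) * X 1 ^ ((α:ℕ)*p) *
        ((C t * X 0 ^ (p+1))^i * (X 0 * X 1 ^ p)^(k-i) * (k.choose i : MvPolynomial (Fin 2) K))
      = C (c α ^ p * t^i * (k.choose i : K)) * X 0 ^ ((k - (α:ℕ))*p + ((p+1)*i + (k-i)))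
          * X 1 ^ ((α:ℕ)*p + p*(k-i)) := by
    intro α i
    simp only [C_mul, C_pow, map_natCast]
    rw [show (C (k.choose i : K) : MvPolynomial (Fin 2) K) = (k.choose i : MvPolynomial (Fin 2) K)
      from map_natCast C _]
    ring
  refine Finset.sum_congr rfl fun α _ => ?_
  have hsum : ∀ i ∈ Finset.range (k+1),
      coeff e (C (c α ^ p) * X 0 ^ ((k - (α:ℕ))*p) * X 1 ^ ((α:ℕ)*p) *
        ((C t * X 0 ^ (p+1))^i * (X 0 * X 1 ^ p)^(k-i) *
          (k.choose i : MvPolynomial (Fin 2) K)))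
      = if i = (α : ℕ) then c α ^ p * t^i * (k.choose i : K) else 0 := by
    intro i hi
    rw [hterm α i, coeff_CXY', he0, he1]
    congr 1
    rw [eq_iff_iff, ← add_assoc]
    exact arith_iff p k α i (by omega) (Nat.lt_succ_iff.mp (Finset.mem_range.mp hi)) hp.pos
  rw [Finset.sum_congr rfl hsum, Finset.sum_ite_eq' (Finset.range (k+1)) (α : ℕ)
    (fun i => c α ^ p * t^i * (k.choose i : K)), if_pos (Finset.mem_range.mpr α.is_lt)]
  ring
end

section
/- Let K be a field of characteristic p > 0 and S an ℕ-graded Cohen–Macaulay ring finitely generated over S_0 = K, with homogeneous maximal ideal 𝔫 and d = dim S. Fix a homogeneous system of parameters x_1,...,x_d. Suppose η = [s/(x_1···x_d)] ∈ H^d_𝔫(S) is a homogeneous class with s homogeneous, such that for every q = p^e one has s^q ∈ (x_1^q,...,x_d^q) + ((x_1···x_d)^{q−1}) but s^q ∉ (x_1^q,...,x_d^q). Then deg s ≥ deg(x_1···x_d), i.e., deg η ≥ 0. -/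
/-- Components of elements of the principal ideal generated by a homogeneous element of
degree `n` vanish in degrees below `n`. -/
theorem aux_low {K S : Type*} [Field K] [CommRing S] [Algebra K S]
    (𝒜 : ℕ → Submodule K S) [GradedAlgebra 𝒜]
    {m : S} {n : ℕ} (hm : m ∈ 𝒜 n) {b : S} (hb : b ∈ Ideal.span {m})
    {k : ℕ} (hk : k < n) : (DirectSum.decompose 𝒜 b k : S) = 0 := by
  obtain ⟨r, rfl⟩ := Ideal.mem_span_singleton'.mp hb
  clear hb
  induction r using DirectSum.Decomposition.inductionOn 𝒜 with
  | zero => simp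
  | @homogeneous i r =>
      have : (r : S) * m ∈ 𝒜 (i + n) := SetLike.mul_mem_graded r.2 hm
      exact DirectSum.decompose_of_mem_ne 𝒜 this (by omega)
  | add a b ha hb =>
      rw [add_mul, DirectSum.decompose_add, DirectSum.add_apply, Submodule.coe_add, ha, hb,
        add_zero]

/-- Let `K` be a field of characteristic `p > 0` and `S` an `ℕ`-graded Cohen–Macaulay ring,
finitely generated over `S₀ = K`, with homogeneous maximal (irrelevant) ideal `𝔫` and
`d = dim S`.  Fix a homogeneous system of parameters `x₁, ..., x_d` (so the radical of
`(x₁,...,x_d)` is `𝔫`; by Cohen–Macaulayness `x₁,...,x_d` is a regular sequence).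
Suppose `s` is homogeneous of degree `e` such that for every `q = p^{e'}` one has
`s^q ∈ (x₁^q,...,x_d^q) + ((x₁⋯x_d)^{q-1})` but `s^q ∉ (x₁^q,...,x_d^q)`.
Then `deg s ≥ deg (x₁⋯x_d)`, i.e. the class `η = [s/(x₁⋯x_d)] ∈ H^d_𝔫(S)` has
`deg η ≥ 0`. -/
theorem stmt_8 (p : ℕ) (hp : p.Prime) {K S : Type*} [Field K] [CharP K p]
    [CommRing S] [Algebra K S] (𝒜 : ℕ → Submodule K S) [GradedAlgebra 𝒜]
    [IsNoetherianRing S] (hfg : Algebra.FiniteType K S)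
    (d : ℕ) (hd : ringKrullDim S = d)
    (x : Fin d → S) (deg : Fin d → ℕ) (hx : ∀ i, x i ∈ 𝒜 (deg i))
    (hdegpos : ∀ i, 0 < deg i)
    (hsop : (Ideal.span (Set.range x)).radical = (HomogeneousIdeal.irrelevant 𝒜).toIdeal)
    (hreg : RingTheory.Sequence.IsRegular S (List.ofFn x))
    (s : S) (e : ℕ) (hs : s ∈ 𝒜 e)
    (hin : ∀ e' : ℕ, s ^ (p ^ e') ∈
      Ideal.span (Set.range fun i => x i ^ (p ^ e')) ⊔
        Ideal.span {(∏ i, x i) ^ (p ^ e' - 1)})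
    (hout : ∀ e' : ℕ, s ^ (p ^ e') ∉ Ideal.span (Set.range fun i => x i ^ (p ^ e'))) :
    ∑ i, deg i ≤ e := by
  set D := ∑ i, deg i with hD
  -- Key degree bound from the local cohomology membership conditions:
  have key : ∀ e' : ℕ, (p ^ e' - 1) * D ≤ p ^ e' * e := by
    intro e'
    by_contra hlt
    push_neg at hlt
    set q := p ^ e' with hq
    obtain ⟨a, haI, b, hbJ, hab⟩ := Submodule.mem_sup.mp (hin e')
    have hIhom : (Ideal.span (Set.range fun i => x i ^ q)).IsHomogeneous 𝒜 := by
      apply Ideal.homogeneous_span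
      rintro _ ⟨i, rfl⟩
      exact ⟨q * deg i, by simpa [smul_eq_mul] using SetLike.pow_mem_graded q (hx i)⟩
    have hprod : (∏ i, x i) ∈ 𝒜 D :=
      SetLike.prod_mem_graded 𝒜 deg x fun i _ => hx i
    have hm : (∏ i, x i) ^ (q - 1) ∈ 𝒜 ((q - 1) * D) := by
      simpa [smul_eq_mul] using SetLike.pow_mem_graded (q - 1) hprod
    have hsq : s ^ q ∈ 𝒜 (q * e) := by
      simpa [smul_eq_mul] using SetLike.pow_mem_graded q hs
    have h1 : (DirectSum.decompose 𝒜 (s ^ q) (q * e) : S) = s ^ q :=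
      DirectSum.decompose_of_mem_same 𝒜 hsq
    have h2 : (DirectSum.decompose 𝒜 b (q * e) : S) = 0 := aux_low 𝒜 hm hbJ hlt
    refine hout e' ?_
    have ha' := hIhom (q * e) haI
    rw [← h1, ← hab, DirectSum.decompose_add, DirectSum.add_apply, Submodule.coe_add, h2,
      add_zero]
    exact ha'
  -- Arithmetic: take q = p^D > D.
  by_contra he
  push_neg at he
  set q := p ^ D with hq
  have hqD : D < q := Nat.lt_pow_self hp.one_lt
  have hkey := key D
  rw [Nat.sub_one_mul] at hkey
  have h4 : q * e + q ≤ q * D := by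
    have := Nat.mul_le_mul_left q he
    calc q * e + q = q * (e + 1) := by ring
      _ ≤ q * D := this
  have h5 : q * D ≤ q * e + D := Nat.sub_le_iff_le_add.mp hkey
  have : q ≤ D := le_of_add_le_add_left (le_trans h4 h5)
  omega
end

section
/- Let p be a prime and let S = K[x,y,z_1,...,z_{p−1}] be a polynomial ring over K = 𝔽_p(t). Let k, γ_1, ..., γ_{p−1} be nonnegative integers with m := k + Σγ_i ≤ p−1, and c_0,...,c_k ∈ K. If (Σ_{α+β=k} c_α^p x^{βp} y^{αp}) (t x^{p+1} + x y^p + Σ_i z_i^{p+1})^m lies in the monomial ideal (x^{(k+1)p}, y^{(k+1)p}, z_1^{(γ_1+1)p}, ..., z_{p−1}^{(γ_{p−1}+1)p}), then all c_α = 0. -/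
open MvPolynomial

lemma prod_monomial' {σ R ι : Type*} [CommSemiring R] (s : Finset ι) (e : ι → (σ →₀ ℕ)) (a : ι → R) :
    ∏ i ∈ s, monomial (e i) (a i) = monomial (∑ i ∈ s, e i) (∏ i ∈ s, a i) := by
  classical
  induction s using Finset.cons_induction with
  | empty => simp [MvPolynomial.monomial_zero', map_one]
  | cons i s hi ih =>
    rw [Finset.prod_cons, Finset.sum_cons, Finset.prod_cons, ih, MvPolynomial.monomial_mul]

lemma poly_digits {p : ℕ} (hp : p.Prime) {n : ℕ} (hn : n ≤ p) (f : Fin n → Polynomial (ZMod p))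
    (h : ∑ α, f α ^ p * Polynomial.X ^ (α : ℕ) = 0) : ∀ α, f α = 0 := by
  haveI : Fact p.Prime := ⟨hp⟩
  have hexp : ∀ (g : Polynomial (ZMod p)) (d : ℕ),
      (g ^ p).coeff d = if p ∣ d then g.coeff (d / p) else 0 := by
    intro g d
    have := Polynomial.map_frobenius_expand p g
    rw [ZMod.frobenius_zmod, Polynomial.map_id] at this
    rw [← this, Polynomial.coeff_expand hp.pos]
  intro α
  ext j
  have hc := congrArg (Polynomial.coeff · (p * j + α)) h
  simp only [Polynomial.finset_sum_coeff, Polynomial.coeff_zero] at hc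
  rw [Finset.sum_eq_single α] at hc
  · rw [Polynomial.coeff_mul_X_pow', if_pos (by omega), Nat.add_sub_cancel, hexp,
      if_pos ⟨j, rfl⟩, Nat.mul_div_cancel_left _ hp.pos] at hc
    simpa using hc
  · intro β _ hβα
    rw [Polynomial.coeff_mul_X_pow']
    split_ifs with hle
    · rw [hexp, if_neg]
      intro hdvd
      obtain ⟨c, hc'⟩ := hdvd
      have h1 : p * j + (α : ℕ) = p * c + (β : ℕ) := by omega
      have h2 : (p * j + (α : ℕ)) % p = (α : ℕ) % p := by simp [Nat.mul_add_mod]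
      have h3 : (p * c + (β : ℕ)) % p = (β : ℕ) % p := by simp [Nat.mul_add_mod]
      have hαp : (α : ℕ) < p := lt_of_lt_of_le α.isLt hn
      have hβp : (β : ℕ) < p := lt_of_lt_of_le β.isLt hn
      rw [h1, h3] at h2
      rw [Nat.mod_eq_of_lt hβp, Nat.mod_eq_of_lt hαp] at h2
      exact hβα (Fin.ext h2)
    · rfl
  · simp

lemma ratfunc_pth_power_indep {p : ℕ} [hpf : Fact p.Prime] {n : ℕ} (hn : n ≤ p)
    (b : Fin n → RatFunc (ZMod p))
    (h : ∑ α, b α ^ p * RatFunc.X ^ (α : ℕ) = 0) : ∀ α, b α = 0 := by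
  have hp := hpf.out
  obtain ⟨g, hg⟩ := IsLocalization.exist_integer_multiples
    (nonZeroDivisors (Polynomial (ZMod p))) Finset.univ b
  choose f hf using fun α => hg α (Finset.mem_univ α)
  have key : ∑ α, f α ^ p * Polynomial.X ^ (α : ℕ) = 0 := by
    apply IsFractionRing.injective (Polynomial (ZMod p)) (RatFunc (ZMod p))
    rw [map_sum, map_zero]
    have : ∀ α : Fin n, algebraMap (Polynomial (ZMod p)) (RatFunc (ZMod p)) (f α ^ p * Polynomial.X ^ (α:ℕ))
        = (algebraMap (Polynomial (ZMod p)) (RatFunc (ZMod p)) (g : Polynomial (ZMod p))) ^ p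
          * (b α ^ p * RatFunc.X ^ (α : ℕ)) := by
      intro α
      rw [map_mul, map_pow, map_pow, hf α, Algebra.smul_def]
      ring_nf
      rfl
    rw [Finset.sum_congr rfl fun α _ => this α, ← Finset.mul_sum, h, mul_zero]
  intro α
  have hfα := poly_digits hp hn f key α
  have := hf α
  rw [hfα, map_zero, Algebra.smul_def] at this
  have hgne : algebraMap (Polynomial (ZMod p)) (RatFunc (ZMod p)) (g : Polynomial (ZMod p)) ≠ 0 := by
    simpa using nonZeroDivisors.coe_ne_zero g
  exact (mul_eq_zero.mp this.symm).resolve_left hgne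

set_option maxHeartbeats 2000000 in
lemma main_aux (p : ℕ) [hpf : Fact p.Prime] (k : ℕ) (γ : Fin (p - 1) → ℕ)
    (hmle : k + ∑ i, γ i ≤ p - 1) (c : Fin (k + 1) → RatFunc (ZMod p))
    (hmem :
      (∑ α : Fin (k + 1), C (c α ^ p) * X (Sum.inl 0) ^ ((k - (α : ℕ)) * p) *
            X (Sum.inl 1) ^ ((α : ℕ) * p)) *
          (C RatFunc.X * X (Sum.inl 0) ^ (p + 1) + X (Sum.inl 0) * X (Sum.inl 1) ^ p
              + ∑ i, X (Sum.inr i) ^ (p + 1)) ^ (k + ∑ i, γ i) ∈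
        Ideal.span ({(X (Sum.inl 0) : MvPolynomial (Fin 2 ⊕ Fin (p - 1)) (RatFunc (ZMod p))) ^ ((k + 1) * p),
            X (Sum.inl 1) ^ ((k + 1) * p)} ∪
          Set.range fun i => X (Sum.inr i) ^ ((γ i + 1) * p))) :
    ∀ α, c α = 0 := by
  classical
  have hp := hpf.out
  have hp2 : 2 ≤ p := hp.two_le
  set m := k + ∑ i, γ i with hm_def
  have hkm : k ≤ m := Nat.le_add_right _ _
  have hkp : k < p := by omega
  have hγm : ∀ j, γ j ≤ m := fun j => le_trans (Finset.single_le_sum (f := γ)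
    (fun i _ => Nat.zero_le _) (Finset.mem_univ j)) (Nat.le_add_left _ _)
  have hγp : ∀ j, γ j < p := fun j => by have := hγm j; omega
  -- exponent data
  set Ez : (Fin 2 ⊕ Fin (p - 1)) →₀ ℕ := ∑ i, Finsupp.single (Sum.inr i) ((p + 1) * γ i) with hEz_def
  have hEzr : ∀ j, Ez (Sum.inr j) = (p + 1) * γ j := by
    intro j
    rw [hEz_def, Finset.sum_apply', Finset.sum_eq_single j
      (fun b _ hbj => Finsupp.single_eq_of_ne' (by simp [hbj])) (by simp)]
    exact Finsupp.single_eq_same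
  have hEzl : ∀ s : Fin 2, Ez (Sum.inl s) = 0 := by
    intro s
    rw [hEz_def, Finset.sum_apply']
    exact Finset.sum_eq_zero fun b _ => Finsupp.single_eq_of_ne (by simp)
  have hne10 : (Sum.inl 1 : (Fin 2 ⊕ Fin (p - 1))) ≠ Sum.inl 0 := by simp
  have hne01 : (Sum.inl 0 : (Fin 2 ⊕ Fin (p - 1))) ≠ Sum.inl 1 := by simp
  -- values of exponents of the shape we use
  have hrval : ∀ a b' : ℕ,
      ((Finsupp.single (Sum.inl 0) a + Finsupp.single (Sum.inl 1) b' + Ez :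
          (Fin 2 ⊕ Fin (p - 1)) →₀ ℕ) (Sum.inl 0) = a)
      ∧ ((Finsupp.single (Sum.inl 0) a + Finsupp.single (Sum.inl 1) b' + Ez :
          (Fin 2 ⊕ Fin (p - 1)) →₀ ℕ) (Sum.inl 1) = b')
      ∧ ∀ j, (Finsupp.single (Sum.inl 0) a + Finsupp.single (Sum.inl 1) b' + Ez :
          (Fin 2 ⊕ Fin (p - 1)) →₀ ℕ) (Sum.inr j) = (p + 1) * γ j := by
    intro a b'
    refine ⟨?_, ?_, fun j => ?_⟩
    · rw [Finsupp.add_apply, Finsupp.add_apply, Finsupp.single_eq_same,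
        Finsupp.single_eq_of_ne' hne10, hEzl 0]
      simp
    · rw [Finsupp.add_apply, Finsupp.add_apply, Finsupp.single_eq_same,
        Finsupp.single_eq_of_ne' hne01, hEzl 1]
      simp
    · rw [Finsupp.add_apply, Finsupp.add_apply,
        Finsupp.single_eq_of_ne (by simp), Finsupp.single_eq_of_ne (by simp), hEzr j]
      simp
  set e : (Fin 2 ⊕ Fin (p - 1)) →₀ ℕ :=
    Finsupp.single (Sum.inl 0) (k * p + k) + Finsupp.single (Sum.inl 1) (k * p) + Ez with he_def
  have he0 : e (Sum.inl 0) = k * p + k := (hrval _ _).1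
  have he1 : e (Sum.inl 1) = k * p := (hrval _ _).2.1
  have her : ∀ j, e (Sum.inr j) = (p + 1) * γ j := (hrval _ _).2.2
  -- Step 1: the coefficient of `e` in the product vanishes
  set F : MvPolynomial (Fin 2 ⊕ Fin (p - 1)) (RatFunc (ZMod p)) :=
    (∑ α : Fin (k + 1), C (c α ^ p) * X (Sum.inl 0) ^ ((k - (α : ℕ)) * p) *
        X (Sum.inl 1) ^ ((α : ℕ) * p)) *
      (C RatFunc.X * X (Sum.inl 0) ^ (p + 1) + X (Sum.inl 0) * X (Sum.inl 1) ^ p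
          + ∑ i : Fin (p - 1), X (Sum.inr i) ^ (p + 1)) ^ m with hF_def
  have hS : ({(X (Sum.inl 0) : MvPolynomial (Fin 2 ⊕ Fin (p - 1)) (RatFunc (ZMod p))) ^ ((k + 1) * p),
        X (Sum.inl 1) ^ ((k + 1) * p)} ∪ Set.range fun i => X (Sum.inr i) ^ ((γ i + 1) * p))
      = (fun s => monomial s (1 : RatFunc (ZMod p))) ''
        ({Finsupp.single (Sum.inl 0) ((k + 1) * p), Finsupp.single (Sum.inl 1) ((k + 1) * p)} ∪
          Set.range fun i : Fin (p - 1) => Finsupp.single (Sum.inr i) ((γ i + 1) * p)) := by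
    rw [Set.image_union, Set.image_insert_eq, Set.image_singleton, ← Set.range_comp]
    simp only [Function.comp_def, X_pow_eq_monomial]
  have hcoeff0 : coeff e F = 0 := by
    by_contra hne
    rw [hS, mem_ideal_span_monomial_image] at hmem
    obtain ⟨si, hsi, hle⟩ := hmem e (mem_support_iff.mpr hne)
    simp only [Set.mem_union, Set.mem_insert_iff, Set.mem_singleton_iff, Set.mem_range] at hsi
    rcases hsi with (rfl | rfl) | ⟨j, rfl⟩
    · rw [Finsupp.single_le_iff, he0] at hle
      nlinarith
    · rw [Finsupp.single_le_iff, he1] at hle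
      nlinarith
    · rw [Finsupp.single_le_iff, her j] at hle
      nlinarith [hγp j]
  -- Step 2: multinomial expansion
  set u : (Fin 2 ⊕ Fin (p - 1)) → ((Fin 2 ⊕ Fin (p - 1)) →₀ ℕ) :=
    Sum.elim ![Finsupp.single (Sum.inl 0) (p + 1),
      Finsupp.single (Sum.inl 0) 1 + Finsupp.single (Sum.inl 1) p]
      (fun i => Finsupp.single (Sum.inr i) (p + 1)) with hu_def
  set w : (Fin 2 ⊕ Fin (p - 1)) → RatFunc (ZMod p) := Sum.elim ![RatFunc.X, 1] (fun _ => 1)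
    with hw_def
  have husum : ∀ d : (Fin 2 ⊕ Fin (p - 1)) → ℕ,
      ((∑ s, d s • u s) (Sum.inl 0) = d (Sum.inl 0) * (p + 1) + d (Sum.inl 1))
      ∧ ((∑ s, d s • u s) (Sum.inl 1) = d (Sum.inl 1) * p)
      ∧ ∀ j, ((∑ s, d s • u s) (Sum.inr j) = d (Sum.inr j) * (p + 1)) := by
    intro d
    refine ⟨?_, ?_, fun j => ?_⟩ <;>
      rw [Finset.sum_apply', Fintype.sum_sum_type, Fin.sum_univ_two] <;>
      simp [hu_def, Finsupp.single_apply, mul_ite, Finset.sum_add_distrib, Finset.sum_ite_eq'] <;>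
      ring
  have hBpow : (C RatFunc.X * X (Sum.inl 0) ^ (p + 1) + X (Sum.inl 0) * X (Sum.inl 1) ^ p
        + ∑ i : Fin (p - 1), X (Sum.inr i) ^ (p + 1) :
          MvPolynomial (Fin 2 ⊕ Fin (p - 1)) (RatFunc (ZMod p))) ^ m
      = ∑ d ∈ Finset.piAntidiag (Finset.univ : Finset (Fin 2 ⊕ Fin (p - 1))) m,
          C ((Nat.multinomial Finset.univ d : RatFunc (ZMod p))) *
            monomial (∑ s, d s • u s) (∏ s, w s ^ d s) := by
    have hx : (X (Sum.inl 0) : MvPolynomial (Fin 2 ⊕ Fin (p - 1)) (RatFunc (ZMod p))) *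
          X (Sum.inl 1) ^ p
        = monomial (Finsupp.single (Sum.inl 0) 1 + Finsupp.single (Sum.inl 1) p) 1 := by
      rw [← pow_one (X (Sum.inl 0)), X_pow_eq_monomial, X_pow_eq_monomial, monomial_mul, one_mul]
    have hB : (C RatFunc.X * X (Sum.inl 0) ^ (p + 1) + X (Sum.inl 0) * X (Sum.inl 1) ^ p
        + ∑ i : Fin (p - 1), X (Sum.inr i) ^ (p + 1) :
          MvPolynomial (Fin 2 ⊕ Fin (p - 1)) (RatFunc (ZMod p)))
        = ∑ s, monomial (u s) (w s) := by
      rw [Fintype.sum_sum_type, Fin.sum_univ_two]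
      simp only [hu_def, hw_def, Sum.elim_inl, Sum.elim_inr, Matrix.cons_val_zero,
        Matrix.cons_val_one, Matrix.head_cons]
      rw [C_mul_X_pow_eq_monomial, hx]
      congr 1
      exact Finset.sum_congr rfl fun i _ => X_pow_eq_monomial
    rw [hB, Finset.sum_pow_eq_sum_piAntidiag]
    refine Finset.sum_congr rfl fun d hd => ?_
    rw [← map_natCast (C : RatFunc (ZMod p) →+*
      MvPolynomial (Fin 2 ⊕ Fin (p - 1)) (RatFunc (ZMod p)))]
    congr 1
    simp_rw [monomial_pow]
    rw [prod_monomial']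
  -- Step 3: extract the coefficient
  have hcoeffF : coeff e F = ∑ α : Fin (k + 1), c α ^ p *
      ((Nat.multinomial Finset.univ (Sum.elim ![(α : ℕ), k - (α : ℕ)] γ) : RatFunc (ZMod p)) *
        RatFunc.X ^ (α : ℕ)) := by
    rw [hF_def, hBpow, Finset.sum_mul, coeff_sum]
    refine Finset.sum_congr rfl fun α _ => ?_
    have hαk : (α : ℕ) ≤ k := Nat.lt_succ_iff.mp α.isLt
    set d₀ : (Fin 2 ⊕ Fin (p - 1)) → ℕ := Sum.elim ![(α : ℕ), k - (α : ℕ)] γ with hd₀_def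
    have hd₀0 : d₀ (Sum.inl 0) = (α : ℕ) := rfl
    have hd₀1 : d₀ (Sum.inl 1) = k - (α : ℕ) := rfl
    have hd₀r : ∀ j, d₀ (Sum.inr j) = γ j := fun j => rfl
    have harith : (α : ℕ) * (p + 1) + (k - (α : ℕ)) = (α : ℕ) * p + k := by
      rw [Nat.mul_add, mul_one, add_assoc, Nat.add_sub_cancel' hαk]
    -- rewrite the A-term as a monomial and split the exponent
    have hAterm : (C (c α ^ p) * X (Sum.inl 0) ^ ((k - (α : ℕ)) * p) *
          X (Sum.inl 1) ^ ((α : ℕ) * p) : MvPolynomial (Fin 2 ⊕ Fin (p - 1)) (RatFunc (ZMod p)))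
        = monomial (Finsupp.single (Sum.inl 0) ((k - (α : ℕ)) * p) +
            Finsupp.single (Sum.inl 1) ((α : ℕ) * p)) (c α ^ p) := by
      rw [C_mul_X_pow_eq_monomial, X_pow_eq_monomial, monomial_mul, mul_one]
    have hsplit : e = (Finsupp.single (Sum.inl 0) ((k - (α : ℕ)) * p) +
          Finsupp.single (Sum.inl 1) ((α : ℕ) * p))
        + (Finsupp.single (Sum.inl 0) ((α : ℕ) * p + k) +
            Finsupp.single (Sum.inl 1) ((k - (α : ℕ)) * p) + Ez) := by
      have hcomb : ∀ a a' b b' : ℕ,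
          (Finsupp.single (Sum.inl (α := Fin 2) (β := Fin (p - 1)) 0) a +
            Finsupp.single (Sum.inl 1) b) +
            (Finsupp.single (Sum.inl 0) a' + Finsupp.single (Sum.inl 1) b' + Ez)
          = Finsupp.single (Sum.inl 0) (a + a') + Finsupp.single (Sum.inl 1) (b + b') + Ez := by
        intro a a' b b'
        rw [Finsupp.single_add, Finsupp.single_add]
        abel
      rw [hcomb, he_def]
      congr 2
      · rw [← add_assoc, ← add_mul, Nat.sub_add_cancel hαk]
      · rw [← add_mul, Nat.add_sub_cancel' hαk]
    rw [hAterm, hsplit, coeff_monomial_mul, coeff_sum]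
    simp_rw [coeff_C_mul, coeff_monomial]
    congr 1
    have hmemd₀ : d₀ ∈ Finset.piAntidiag (Finset.univ : Finset (Fin 2 ⊕ Fin (p - 1))) m := by
      rw [Finset.mem_piAntidiag]
      refine ⟨?_, fun i _ => Finset.mem_univ i⟩
      rw [Fintype.sum_sum_type, Fin.sum_univ_two]
      simp only [hd₀_def, Sum.elim_inl, Sum.elim_inr, Matrix.cons_val_zero, Matrix.cons_val_one,
        Matrix.head_cons]
      rw [Nat.add_sub_cancel' hαk]
    have hcase : ∀ s : Fin 2 ⊕ Fin (p - 1),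
        s = Sum.inl 0 ∨ s = Sum.inl 1 ∨ ∃ j, s = Sum.inr j := by
      rintro (i | j)
      · fin_cases i
        · exact Or.inl rfl
        · exact Or.inr (Or.inl rfl)
      · exact Or.inr (Or.inr ⟨j, rfl⟩)
    have hd₀sum : (∑ s, d₀ s • u s) = Finsupp.single (Sum.inl 0) ((α : ℕ) * p + k) +
        Finsupp.single (Sum.inl 1) ((k - (α : ℕ)) * p) + Ez := by
      ext s
      rcases hcase s with rfl | rfl | ⟨j, rfl⟩
      · rw [(husum d₀).1, hd₀0, hd₀1, (hrval _ _).1, harith]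
      · rw [(husum d₀).2.1, hd₀1, (hrval _ _).2.1]
      · rw [(husum d₀).2.2 j, hd₀r j, (hrval _ _).2.2 j, mul_comm]
    have huniq : ∀ d : (Fin 2 ⊕ Fin (p - 1)) → ℕ,
        (∑ s, d s • u s) = Finsupp.single (Sum.inl 0) ((α : ℕ) * p + k) +
          Finsupp.single (Sum.inl 1) ((k - (α : ℕ)) * p) + Ez → d = d₀ := by
      intro d hd
      have e0 := DFunLike.congr_fun hd (Sum.inl 0)
      have e1 := DFunLike.congr_fun hd (Sum.inl 1)
      rw [(husum d).1, (hrval _ _).1] at e0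
      rw [(husum d).2.1, (hrval _ _).2.1] at e1
      have hb1 : d (Sum.inl 1) = k - (α : ℕ) := Nat.eq_of_mul_eq_mul_right hp.pos e1
      have hb0 : d (Sum.inl 0) = (α : ℕ) := by
        rw [hb1] at e0
        have h2 : d (Sum.inl 0) * (p + 1) + (k - (α : ℕ))
            = (α : ℕ) * (p + 1) + (k - (α : ℕ)) := by rw [e0, harith]
        exact Nat.eq_of_mul_eq_mul_right (by omega) (Nat.add_right_cancel h2)
      funext s
      rcases hcase s with rfl | rfl | ⟨j, rfl⟩
      · rw [hb0, hd₀0]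
      · rw [hb1, hd₀1]
      · have er := DFunLike.congr_fun hd (Sum.inr j)
        rw [(husum d).2.2 j, (hrval _ _).2.2 j, mul_comm (p + 1) (γ j)] at er
        rw [hd₀r j]
        exact Nat.eq_of_mul_eq_mul_right (by omega) er
    have hprodw : ∏ s, w s ^ d₀ s = RatFunc.X ^ (α : ℕ) := by
      rw [Fintype.prod_sum_type, Fin.prod_univ_two]
      simp [hw_def, hd₀0]
    rw [Finset.sum_eq_single_of_mem d₀ hmemd₀ (fun b _ hne => by
      rw [if_neg fun hcon => hne (huniq b hcon), mul_zero])]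
    rw [if_pos hd₀sum, hprodw]
  -- Step 4: conclude using linear independence over p-th powers
  haveI : CharP (RatFunc (ZMod p)) p :=
    charP_of_injective_algebraMap (algebraMap (ZMod p) (RatFunc (ZMod p))).injective p
  have hmult_ne : ∀ α : Fin (k + 1),
      ((Nat.multinomial Finset.univ (Sum.elim ![(α : ℕ), k - (α : ℕ)] γ) : RatFunc (ZMod p))) ≠ 0 := by
    intro α h0
    have hαk : (α : ℕ) ≤ k := Nat.lt_succ_iff.mp α.isLt
    have hpd : p ∣ Nat.multinomial Finset.univ (Sum.elim ![(α : ℕ), k - (α : ℕ)] γ) :=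
      (CharP.cast_eq_zero_iff (RatFunc (ZMod p)) p _).mp h0
    have hsum_eq : ∑ s, Sum.elim ![(α : ℕ), k - (α : ℕ)] γ s = m := by
      rw [Fintype.sum_sum_type, Fin.sum_univ_two]
      simp only [Sum.elim_inl, Sum.elim_inr, Matrix.cons_val_zero, Matrix.cons_val_one,
        Matrix.head_cons]
      rw [Nat.add_sub_cancel' hαk]
    have hdvd : Nat.multinomial Finset.univ (Sum.elim ![(α : ℕ), k - (α : ℕ)] γ) ∣ Nat.factorial m := by
      have hspec := Nat.multinomial_spec Finset.univ (Sum.elim ![(α : ℕ), k - (α : ℕ)] γ)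
      rw [hsum_eq] at hspec
      exact ⟨∏ i, Nat.factorial (Sum.elim ![(α : ℕ), k - (α : ℕ)] γ i),
        by rw [← hspec]; ring⟩
    have hpm : p ≤ m := (Nat.Prime.dvd_factorial hp).mp (dvd_trans hpd hdvd)
    omega
  have hfinal : ∑ α : Fin (k + 1), (c α * (Nat.multinomial Finset.univ
      (Sum.elim ![(α : ℕ), k - (α : ℕ)] γ) : RatFunc (ZMod p))) ^ p * RatFunc.X ^ (α : ℕ) = 0 := by
    rw [← hcoeff0, hcoeffF]
    refine Finset.sum_congr rfl fun α _ => ?_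
    have hMp : ((Nat.multinomial Finset.univ (Sum.elim ![(α : ℕ), k - (α : ℕ)] γ) :
        RatFunc (ZMod p))) ^ p
        = (Nat.multinomial Finset.univ (Sum.elim ![(α : ℕ), k - (α : ℕ)] γ) : RatFunc (ZMod p)) := by
      rw [← map_natCast (algebraMap (ZMod p) (RatFunc (ZMod p))), ← map_pow, ZMod.pow_card]
    rw [mul_pow, hMp]
    ring
  have hzero := ratfunc_pth_power_indep (n := k + 1) (by omega)
    (fun α => c α * (Nat.multinomial Finset.univ
      (Sum.elim ![(α : ℕ), k - (α : ℕ)] γ) : RatFunc (ZMod p))) hfinal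
  intro α
  exact (mul_eq_zero.mp (hzero α)).resolve_right (hmult_ne α)

/-- Let `p` be prime, `K = 𝔽_p(t)`, and `K[x,y,z₁,...,z_{p-1}]` a polynomial ring.
Let `k, γ₁, ..., γ_{p-1}` be nonnegative integers with `m := k + Σγᵢ ≤ p - 1`, and
`c₀, ..., c_k ∈ K`.  If
`(∑_{α+β=k} c_α^p x^{βp} y^{αp}) (t x^{p+1} + x yᵖ + Σᵢ zᵢ^{p+1})^m` lies in the
monomial ideal `(x^{(k+1)p}, y^{(k+1)p}, z₁^{(γ₁+1)p}, ..., z_{p-1}^{(γ_{p-1}+1)p})`,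
then all `c_α = 0`. -/
theorem stmt_9 (p : ℕ) (hp : p.Prime) :
    letI : Fact p.Prime := ⟨hp⟩
    let K := RatFunc (ZMod p)
    let t : K := RatFunc.X
    let x : MvPolynomial (Fin 2 ⊕ Fin (p - 1)) K := X (Sum.inl 0)
    let y : MvPolynomial (Fin 2 ⊕ Fin (p - 1)) K := X (Sum.inl 1)
    let z : Fin (p - 1) → MvPolynomial (Fin 2 ⊕ Fin (p - 1)) K := fun i => X (Sum.inr i)
    ∀ (k : ℕ) (γ : Fin (p - 1) → ℕ), k + ∑ i, γ i ≤ p - 1 →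
      ∀ c : Fin (k + 1) → K,
        (∑ α : Fin (k + 1), C (c α ^ p) * x ^ ((k - (α : ℕ)) * p) * y ^ ((α : ℕ) * p)) *
            (C t * x ^ (p + 1) + x * y ^ p + ∑ i, z i ^ (p + 1)) ^ (k + ∑ i, γ i) ∈
          Ideal.span ({x ^ ((k + 1) * p), y ^ ((k + 1) * p)} ∪
            Set.range fun i => z i ^ ((γ i + 1) * p)) →
        ∀ α, c α = 0 := by
  haveI : Fact p.Prime := ⟨hp⟩
  intro K t x y z k γ hle c hmem α
  exact main_aux p k γ hle c hmem α
end

section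
/- Let p be a prime, K = 𝔽_p(t_1,...,t_p), and S = K[x_0,...,x_p]/(x_0^p − Σ t_i x_i^p). Then in S, the element x_0^p · (x_1 ··· x_p)^{p−1} lies in the ideal (x_1^p, ..., x_p^p)S, while x_0 · (x_1···x_p)^{0} = x_0 does not; consequently the Frobenius action on the Čech cohomology class [x_0/(x_1···x_p)] ∈ H^p_𝔫(S) is zero, i.e., x_0^p ∈ (x_1^p,...,x_p^p)S. -/
open MvPolynomial

set_option maxHeartbeats 1000000
set_option synthInstance.maxHeartbeats 400000

/-- Let `p` be prime, `K = 𝔽_p(t₁,...,t_p)`, and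
`S = K[x₀,...,x_p]/(x₀ᵖ - Σ tᵢxᵢᵖ)`.  Then `x₀ᵖ (x₁⋯x_p)^{p-1}` lies in the ideal
`(x₁ᵖ,...,x_pᵖ)S`, while `x₀ (x₁⋯x_p)⁰ = x₀` does not; consequently the Frobenius
action on the Čech cohomology class `[x₀/(x₁⋯x_p)] ∈ H^p_𝔫(S)` is zero, i.e.
`x₀ᵖ ∈ (x₁ᵖ,...,x_pᵖ)S`. -/
theorem stmt_14 (p : ℕ) (hp : p.Prime) :
    letI : Fact p.Prime := ⟨hp⟩
    let K := FractionRing (MvPolynomial (Fin p) (ZMod p))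
    let t : Fin p → K := fun i => algebraMap (MvPolynomial (Fin p) (ZMod p)) K (X i)
    let S := MvPolynomial (Fin (p + 1)) K ⧸
      Ideal.span {(X 0 : MvPolynomial (Fin (p + 1)) K) ^ p -
        ∑ i : Fin p, C (t i) * X i.succ ^ p}
    let x : Fin (p + 1) → S := fun j => Ideal.Quotient.mk _ (X j)
    let I : Ideal S := Ideal.span (Set.range fun i : Fin p => x i.succ ^ p)
    x 0 ^ p * (∏ i : Fin p, x i.succ) ^ (p - 1) ∈ I ∧
    x 0 * (∏ i : Fin p, x i.succ) ^ 0 ∉ I ∧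
    x 0 ^ p ∈ I := by
  intro K t S x I
  haveI : Fact p.Prime := ⟨hp⟩
  have hp2 : 2 ≤ p := hp.two_le
  set f : MvPolynomial (Fin (p + 1)) K :=
    (X 0 : MvPolynomial (Fin (p + 1)) K) ^ p - ∑ i : Fin p, C (t i) * X i.succ ^ p with hf
  -- the key relation in S
  have hrel : x 0 ^ p = ∑ i : Fin p, Ideal.Quotient.mk _ (C (t i)) * x i.succ ^ p := by
    have h2 : x 0 ^ p - ∑ i : Fin p, Ideal.Quotient.mk _ (C (t i)) * x i.succ ^ p = 0 := by
      have heq : x 0 ^ p - ∑ i : Fin p, Ideal.Quotient.mk _ (C (t i)) * x i.succ ^ p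
          = Ideal.Quotient.mk _ f := by
        simp only [hf, map_sub, map_sum, map_mul, map_pow]
        rfl
      rw [heq, Ideal.Quotient.eq_zero_iff_mem]
      exact Ideal.subset_span rfl
    linear_combination h2
  have hgen : ∀ i : Fin p, x i.succ ^ p ∈ I := fun i =>
    Ideal.subset_span ⟨i, rfl⟩
  have h3 : x 0 ^ p ∈ I := by
    rw [hrel]
    exact Ideal.sum_mem I fun i _ => I.mul_mem_left _ (hgen i)
  refine ⟨(mul_comm ((∏ i : Fin p, x i.succ) ^ (p - 1)) (x 0 ^ p)) ▸ I.mul_mem_left _ h3, ?_, h3⟩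
  -- the nonmembership: map to dual numbers
  intro hmem
  rw [pow_zero, mul_one] at hmem
  set φ : MvPolynomial (Fin (p + 1)) K →ₐ[K] DualNumber K :=
    aeval (fun j => if j = 0 then (DualNumber.eps : DualNumber K) else 0) with hφ
  have hεp : (DualNumber.eps : DualNumber K) ^ p = 0 := by
    have : (DualNumber.eps : DualNumber K) ^ p =
        DualNumber.eps ^ 2 * DualNumber.eps ^ (p - 2) := by
      rw [← pow_add]
      congr 1
      omega
    rw [this, sq, DualNumber.eps_mul_eps, zero_mul]
  have hφf : φ.toRingHom f = 0 := by
    show φ f = 0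
    simp only [hf, map_sub, map_sum, map_mul, map_pow, hφ, aeval_X, aeval_C]
    rw [if_pos trivial, hεp, Finset.sum_eq_zero, sub_zero]
    intro i _
    rw [if_neg (Fin.succ_ne_zero i), zero_pow hp.ne_zero, mul_zero]
  have hle : Ideal.span {f} ≤ RingHom.ker φ.toRingHom := by
    rw [Ideal.span_le, Set.singleton_subset_iff]
    exact hφf
  set ψ : S →+* DualNumber K := Ideal.Quotient.lift _ φ.toRingHom
    (fun a ha => hle ha) with hψ
  have hψx : ∀ j : Fin (p + 1), ψ (x j) =
      (if j = 0 then (DualNumber.eps : DualNumber K) else 0) := by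
    intro j
    show φ (X j) = _
    simp [hφ]
  have hIker : I ≤ RingHom.ker ψ := by
    rw [Ideal.span_le]
    rintro _ ⟨i, rfl⟩
    simp only [SetLike.mem_coe, RingHom.mem_ker, map_pow, hψx]
    rw [if_neg (fun h => Fin.succ_ne_zero i h)]
    exact zero_pow hp.ne_zero
  have : ψ (x 0) = 0 := hIker hmem
  rw [hψx 0, if_pos rfl] at this
  have h1 : (DualNumber.eps : DualNumber K).snd = 0 := by rw [this]; rfl
  rw [DualNumber.snd_eps] at h1
  exact one_ne_zero (α := FractionRing (MvPolynomial (Fin p) (ZMod p))) h1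
end
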